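/- For all integers k ≥ 2 and p with 0 ≤ p ≤ k−1, the following identity holds in ℝ: (p/k)·Σ_{ℓ=0}^{k−p−1} (1/(ℓ+2))·C(k−p−1, ℓ)·(1/k)^ℓ·((k−1)/k)^{k−p−1−ℓ} + ((k−p)/k)·Σ_{ℓ=0}^{k−p−1} (1/(ℓ+1))·C(k−p−1, ℓ)·(1/k)^ℓ·((k−1)/k)^{k−p−1−ℓ} = [k(k−2p+1) − (k² + k − 3pk + p²)·((k−1)/k)^{k−p}] / ((k−p+1)(k−p)). -/

import Mathlib

open Finset

lemma binom_shift (n : ℕ) (x y : ℝ) :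
    (x + y) ^ (n + 1) - y ^ (n + 1) =
      ∑ ℓ ∈ Finset.range (n + 1), ((n+1).choose (ℓ+1) : ℝ) * x ^ (ℓ+1) * y ^ (n - ℓ) := by
  rw [add_pow, Finset.sum_range_succ']
  simp only [pow_zero, Nat.choose_zero_right, Nat.cast_one, one_mul, mul_one,
    Nat.sub_zero, Nat.succ_sub_succ]
  rw [add_sub_cancel_right]
  exact Finset.sum_congr rfl fun ℓ _ => by ring

lemma binom_shift2 (n : ℕ) (x y : ℝ) :
    (x + y) ^ (n + 2) - y ^ (n + 2) - ((n:ℝ)+2) * x * y ^ (n + 1) =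
      ∑ ℓ ∈ Finset.range (n + 1), ((n+2).choose (ℓ+2) : ℝ) * x ^ (ℓ+2) * y ^ (n - ℓ) := by
  rw [add_pow, Finset.sum_range_succ', Finset.sum_range_succ']
  simp only [pow_zero, Nat.choose_zero_right, Nat.cast_one, one_mul, mul_one,
    Nat.sub_zero, Nat.succ_sub_succ, pow_one, Nat.choose_one_right]
  rw [show (0:ℕ)+1 = 1 from rfl, Nat.choose_one_right]
  push_cast
  rw [add_sub_cancel_right,
    show x^1*y^(n+1)*((n:ℝ)+2) = ((n:ℝ)+2)*x*y^(n+1) from by ring, add_sub_cancel_right]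
  exact Finset.sum_congr rfl fun ℓ _ => by ring

lemma sumA (n : ℕ) (x y : ℝ) :
    ((n:ℝ)+1) * x * ∑ ℓ ∈ Finset.range (n+1),
      (1/((ℓ:ℝ)+1)) * (n.choose ℓ : ℝ) * x^ℓ * y^(n-ℓ)
    = (x+y)^(n+1) - y^(n+1) := by
  rw [binom_shift, Finset.mul_sum]
  refine Finset.sum_congr rfl fun ℓ _ => ?_
  have h : ((n:ℝ)+1) * (n.choose ℓ : ℝ) = ((n+1).choose (ℓ+1) : ℝ) * ((ℓ:ℝ)+1) := by
    exact_mod_cast congrArg (Nat.cast (R := ℝ)) (Nat.add_one_mul_choose_eq n ℓ)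
  have hℓ : ((ℓ:ℝ)+1) ≠ 0 := by positivity
  field_simp
  linear_combination (x^(ℓ+1) * y^(n-ℓ)) * h

lemma sumT (n : ℕ) (x y : ℝ) :
    ((n:ℝ)+1) * ((n:ℝ)+2) * x^2 * ∑ ℓ ∈ Finset.range (n+1),
      (1/(((ℓ:ℝ)+1)*((ℓ:ℝ)+2))) * (n.choose ℓ : ℝ) * x^ℓ * y^(n-ℓ)
    = (x+y)^(n+2) - y^(n+2) - ((n:ℝ)+2) * x * y^(n+1) := by
  rw [binom_shift2, Finset.mul_sum]
  refine Finset.sum_congr rfl fun ℓ _ => ?_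
  have h1 : ((n:ℝ)+1) * (n.choose ℓ : ℝ) = ((n+1).choose (ℓ+1) : ℝ) * ((ℓ:ℝ)+1) := by
    exact_mod_cast congrArg (Nat.cast (R := ℝ)) (Nat.add_one_mul_choose_eq n ℓ)
  have h2 : ((n:ℝ)+2) * ((n+1).choose (ℓ+1) : ℝ) = ((n+2).choose (ℓ+2) : ℝ) * ((ℓ:ℝ)+2) := by
    exact_mod_cast congrArg (Nat.cast (R := ℝ)) (Nat.add_one_mul_choose_eq (n+1) (ℓ+1))
  have hℓ1 : ((ℓ:ℝ)+1) ≠ 0 := by positivity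
  have hℓ2 : ((ℓ:ℝ)+2) ≠ 0 := by positivity
  field_simp
  linear_combination (((n:ℝ)+2) * x^(ℓ+2) * y^(n-ℓ)) * h1 +
    (((ℓ:ℝ)+1) * x^(ℓ+2) * y^(n-ℓ)) * h2

/-- The probability `P[D_{i*}]` identity: for integers `k ≥ 2` and `0 ≤ p ≤ k−1`,
`(p/k)·Σ_{ℓ=0}^{k−p−1} (1/(ℓ+2))·C(k−p−1,ℓ)·(1/k)^ℓ·((k−1)/k)^{k−p−1−ℓ}
 + ((k−p)/k)·Σ_{ℓ=0}^{k−p−1} (1/(ℓ+1))·C(k−p−1,ℓ)·(1/k)^ℓ·((k−1)/k)^{k−p−1−ℓ}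
 = (k(k−2p+1) − (k²+k−3pk+p²)·((k−1)/k)^{k−p}) / ((k−p+1)(k−p))`. -/
theorem prob_main_event_identity (k p : ℕ) (hk : 2 ≤ k) (hp : p ≤ k - 1) :
    ((p : ℝ) / k) *
        (∑ ℓ ∈ Finset.range (k - p), (1 / ((ℓ : ℝ) + 2)) * ((k - p - 1).choose ℓ : ℝ) *
          (1 / (k : ℝ)) ^ ℓ * (((k : ℝ) - 1) / k) ^ (k - p - 1 - ℓ)) +
      (((k : ℝ) - p) / k) *
        (∑ ℓ ∈ Finset.range (k - p), (1 / ((ℓ : ℝ) + 1)) * ((k - p - 1).choose ℓ : ℝ) *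
          (1 / (k : ℝ)) ^ ℓ * (((k : ℝ) - 1) / k) ^ (k - p - 1 - ℓ)) =
      ((k : ℝ) * ((k : ℝ) - 2 * p + 1) -
          ((k : ℝ) ^ 2 + k - 3 * p * k + (p : ℝ) ^ 2) * (((k : ℝ) - 1) / k) ^ (k - p)) /
        (((k : ℝ) - p + 1) * ((k : ℝ) - p)) := by
  have hpk : p + 1 ≤ k := by omega
  have hK : (k:ℝ) ≠ 0 := by positivity
  have hK2 : (2:ℝ) ≤ (k:ℝ) := by exact_mod_cast hk
  have hP : (p:ℝ) + 1 ≤ (k:ℝ) := by exact_mod_cast hpk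
  have hKP : (k:ℝ) - p ≠ 0 := by nlinarith
  have hKP1 : (k:ℝ) - p + 1 ≠ 0 := by nlinarith
  set n := k - p - 1 with hn
  have hn1 : k - p = n + 1 := by omega
  have hcast : (n:ℝ) = (k:ℝ) - p - 1 := by
    have h2 : n = k - (p+1) := by omega
    rw [h2, Nat.cast_sub hpk]
    push_cast; ring
  rw [hn1]
  have hXY : (1/(k:ℝ)) + ((k:ℝ)-1)/(k:ℝ) = 1 := by field_simp; ring
  have hA := sumA n (1/(k:ℝ)) (((k:ℝ)-1)/(k:ℝ))
  have hT := sumT n (1/(k:ℝ)) (((k:ℝ)-1)/(k:ℝ))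
  rw [hXY, one_pow] at hA hT
  rw [pow_succ (((k:ℝ)-1)/(k:ℝ)) (n+1)] at hT
  set A := ∑ ℓ ∈ Finset.range (n+1), (1/((ℓ:ℝ)+1)) * (n.choose ℓ : ℝ) *
      (1/(k:ℝ))^ℓ * (((k:ℝ)-1)/(k:ℝ))^(n-ℓ) with hAdef
  set B := ∑ ℓ ∈ Finset.range (n+1), (1/(((ℓ:ℝ)+1)*((ℓ:ℝ)+2))) * (n.choose ℓ : ℝ) *
      (1/(k:ℝ))^ℓ * (((k:ℝ)-1)/(k:ℝ))^(n-ℓ) with hBdef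
  have hsplit : (∑ ℓ ∈ Finset.range (n+1), (1/((ℓ:ℝ)+2)) * (n.choose ℓ : ℝ) *
      (1/(k:ℝ))^ℓ * (((k:ℝ)-1)/(k:ℝ))^(n-ℓ)) = A - B := by
    rw [hAdef, hBdef, ← Finset.sum_sub_distrib]
    refine Finset.sum_congr rfl fun ℓ _ => ?_
    have hℓ1 : ((ℓ:ℝ)+1) ≠ 0 := by positivity
    have hℓ2 : ((ℓ:ℝ)+2) ≠ 0 := by positivity
    field_simp
    ring
  rw [hsplit]
  set q := (((k:ℝ)-1)/(k:ℝ))^(n+1) with hq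
  rw [hcast] at hA hT
  clear_value A B q
  have hA2 : A = (k:ℝ)*(1-q)/((k:ℝ)-p) := by
    rw [eq_div_iff hKP]
    field_simp at hA
    linear_combination hA
  have hB2 : B = (k:ℝ)*((k:ℝ)-(2*(k:ℝ)-p)*q)/((((k:ℝ)-p)*((k:ℝ)-p+1))) := by
    rw [eq_div_iff (mul_ne_zero hKP hKP1)]
    field_simp at hT
    refine mul_left_cancel₀ hK ?_
    linear_combination (k:ℝ) * hT
  rw [hA2, hB2]
  field_simp
  ring
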